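/- arXiv:hep-th/9904028 — 2 statements merged into one kernel-verified Lean document; each statement's English description precedes it below -/
import Mathlib

section
/- Let c_{kl}^m : ℝ^n → ℝ be smooth functions, symmetric in k,l. If for every λ ∈ ℝ the linear system ∂_k Φ_l = λ Σ_m c_{kl}^m Φ_m for smooth functions Φ_1,…,Φ_n : ℝ^n → ℝ admits, through every point of (ℝ^n)^n (prescribing the values of all Φ_l at a point), a solution, then c satisfies the associativity equations Σ_p c_{kl}^p c_{pm}^q = Σ_p c_{lm}^p c_{kp}^q and ∂_i c_{kl}^m = ∂_k c_{il}^m. -/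
open scoped BigOperators

/-- Partial derivative `∂f/∂u^i` at `x`. -/
noncomputable def pd {n : ℕ} (i : Fin n) (f : (Fin n → ℝ) → ℝ) (x : Fin n → ℝ) : ℝ :=
  fderiv ℝ f x (Pi.single i 1)

namespace AssocAux

variable {n : ℕ}

lemma pd_mul {i : Fin n} {f g : (Fin n → ℝ) → ℝ} {x : Fin n → ℝ}
    (hf : DifferentiableAt ℝ f x) (hg : DifferentiableAt ℝ g x) :
    pd i (fun y => f y * g y) x = pd i f x * g x + f x * pd i g x := by
  unfold pd
  rw [fderiv_fun_mul hf hg]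
  simp only [ContinuousLinearMap.add_apply, ContinuousLinearMap.smul_apply, smul_eq_mul]
  ring

lemma pd_const_mul {i : Fin n} {f : (Fin n → ℝ) → ℝ} {x : Fin n → ℝ} (b : ℝ)
    (hf : DifferentiableAt ℝ f x) :
    pd i (fun y => b * f y) x = b * pd i f x := by
  unfold pd
  rw [fderiv_const_mul hf b]
  simp

lemma pd_sum {i : Fin n} {f : Fin n → (Fin n → ℝ) → ℝ} {x : Fin n → ℝ}
    (hf : ∀ p, DifferentiableAt ℝ (f p) x) :
    pd i (fun y => ∑ p, f p y) x = ∑ p, pd i (f p) x := by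
  unfold pd
  rw [fderiv_fun_sum (fun p _ => hf p)]
  simp

lemma pd_comm (f : (Fin n → ℝ) → ℝ) (hf : ContDiff ℝ (⊤ : ℕ∞) f) (i k : Fin n) (x : Fin n → ℝ) :
    pd i (fun y => pd k f y) x = pd k (fun y => pd i f y) x := by
  have hf1 : Differentiable ℝ f := hf.differentiable (by simp)
  have hf' : ContDiff ℝ (⊤ : ℕ∞) (fderiv ℝ f) := hf.fderiv_right (by simp)
  have hf'd : DifferentiableAt ℝ (fderiv ℝ f) x := (hf'.differentiable (by simp)) x
  have hsym := second_derivative_symmetric (f' := fderiv ℝ f)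
      (fun y => (hf1 y).hasFDerivAt) hf'd.hasFDerivAt (Pi.single i 1) (Pi.single k 1)
  have key : ∀ a b : Fin n, pd a (fun y => pd b f y) x
      = fderiv ℝ (fderiv ℝ f) x (Pi.single a 1) (Pi.single b 1) := by
    intro a b
    unfold pd
    rw [fderiv_clm_apply hf'd (differentiableAt_const _)]
    simp
  rw [key, key, hsym]

lemma single_sum {m : Fin n} (f : Fin n → ℝ) :
    ∑ p, f p * (Pi.single p 1 : Fin n → ℝ) m = f m := by
  rw [Finset.sum_eq_single m]
  · simp
  · intro p _ hp
    simp [Pi.single_apply, Ne.symm hp]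
  · simp

lemma mixed (c : Fin n → Fin n → Fin n → (Fin n → ℝ) → ℝ)
    (hc : ∀ k l m, ContDiff ℝ (⊤ : ℕ∞) (c k l m)) (lam : ℝ) (x₀ : Fin n → ℝ)
    (Φ : Fin n → (Fin n → ℝ) → (Fin n → ℝ)) (hΦ : ∀ l, ContDiff ℝ (⊤ : ℕ∞) (Φ l))
    (hv : ∀ l, Φ l x₀ = Pi.single l 1)
    (heq : ∀ x k l m, pd k (fun x => Φ l x m) x = lam * ∑ p, c k l p x * Φ p x m)
    (i k l m : Fin n) :
    pd i (fun x => pd k (fun y => Φ l y m) x) x₀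
      = lam * (pd i (c k l m) x₀ + lam * ∑ p, c k l p x₀ * c i p m x₀) := by
  have hΦc : ∀ p m, ContDiff ℝ (⊤ : ℕ∞) (fun x => Φ p x m) := fun p m => contDiff_pi.mp (hΦ p) m
  have hΦd : ∀ p m x, DifferentiableAt ℝ (fun x => Φ p x m) x :=
    fun p m x => ((hΦc p m).differentiable (by simp)) x
  have hcd : ∀ a b q x, DifferentiableAt ℝ (c a b q) x :=
    fun a b q x => ((hc a b q).differentiable (by simp)) x
  have hfun : (fun x => pd k (fun y => Φ l y m) x)
      = fun x => lam * ∑ p, c k l p x * Φ p x m := funext fun x => heq x k l m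
  rw [hfun]
  have hterm : ∀ p (x : Fin n → ℝ), DifferentiableAt ℝ (fun y => c k l p y * Φ p y m) x :=
    fun p x => (hcd k l p x).mul (hΦd p m x)
  rw [pd_const_mul _ (DifferentiableAt.fun_sum (fun p _ => hterm p x₀)),
      pd_sum (fun p => hterm p x₀)]
  have hsum : ∀ p, pd i (fun y => c k l p y * Φ p y m) x₀
      = pd i (c k l p) x₀ * (Pi.single p 1 : Fin n → ℝ) m
        + c k l p x₀ * (lam * c i p m x₀) := by
    intro p
    rw [pd_mul (hcd k l p x₀) (hΦd p m x₀), heq x₀ i p m, hv p]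
    congr 2
    have : ∀ q, Φ q x₀ m = (Pi.single q 1 : Fin n → ℝ) m := fun q => by rw [hv q]
    simp_rw [this]
    rw [single_sum (fun q => c i p q x₀)]
  rw [Finset.sum_congr rfl (fun p _ => hsum p), Finset.sum_add_distrib,
      single_sum (fun p => pd i (c k l p) x₀)]
  rw [Finset.mul_sum]
  ring_nf

end AssocAux

/-- If for every value of the spectral parameter `λ` the linear system
    `∂_k Φ_l = λ ∑_m c_{kl}^m Φ_m` admits, through every prescribed value of the
    tuple `(Φ_1, …, Φ_n)` at every point, a smooth solution, then the structure
    functions `c` satisfy the associativity equations and `∂_i c_{kl}^m = ∂_k c_{il}^m`. -/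
theorem associativity_of_compatibility {n : ℕ}
    (c : Fin n → Fin n → Fin n → (Fin n → ℝ) → ℝ)
    (hc : ∀ k l m, ContDiff ℝ (⊤ : ℕ∞) (c k l m))
    (hcsymm : ∀ k l m x, c k l m x = c l k m x)
    (hsol : ∀ (lam : ℝ) (x₀ : Fin n → ℝ) (v : Fin n → Fin n → ℝ),
      ∃ Φ : Fin n → (Fin n → ℝ) → (Fin n → ℝ),
        (∀ l, ContDiff ℝ (⊤ : ℕ∞) (Φ l)) ∧ (∀ l, Φ l x₀ = v l) ∧
        (∀ x k l m, pd k (fun x => Φ l x m) x = lam * ∑ p, c k l p x * Φ p x m)) :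
    (∀ x k l m q, ∑ p, c k l p x * c p m q x = ∑ p, c l m p x * c k p q x) ∧
    (∀ x i k l m, pd i (c k l m) x = pd k (c i l m) x) := by
  -- For each lam and basepoint, get the identity from commuting second derivatives
  have main : ∀ (lam : ℝ) (x₀ : Fin n → ℝ) (i k l m : Fin n),
      lam * (pd i (c k l m) x₀ + lam * ∑ p, c k l p x₀ * c i p m x₀)
        = lam * (pd k (c i l m) x₀ + lam * ∑ p, c i l p x₀ * c k p m x₀) := by
    intro lam x₀ i k l m
    obtain ⟨Φ, hΦ, hv, heq⟩ := hsol lam x₀ (fun p => Pi.single p 1)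
    have hΦc : ContDiff ℝ (⊤ : ℕ∞) (fun x => Φ l x m) := contDiff_pi.mp (hΦ l) m
    calc lam * (pd i (c k l m) x₀ + lam * ∑ p, c k l p x₀ * c i p m x₀)
        = pd i (fun x => pd k (fun y => Φ l y m) x) x₀ :=
          (AssocAux.mixed c hc lam x₀ Φ hΦ hv heq i k l m).symm
      _ = pd k (fun x => pd i (fun y => Φ l y m) x) x₀ :=
          AssocAux.pd_comm _ hΦc i k x₀
      _ = lam * (pd k (c i l m) x₀ + lam * ∑ p, c i l p x₀ * c k p m x₀) :=
          AssocAux.mixed c hc lam x₀ Φ hΦ hv heq k i l m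
  have hB : ∀ (x : Fin n → ℝ) (i k l m : Fin n),
      ∑ p, c k l p x * c i p m x = ∑ p, c i l p x * c k p m x := by
    intro x i k l m
    have h1 := main 1 x i k l m
    have h2 := main (-1) x i k l m
    simp only [one_mul, mul_one, neg_mul, neg_one_mul, mul_neg] at h1 h2
    linarith
  have hA : ∀ (x : Fin n → ℝ) (i k l m : Fin n), pd i (c k l m) x = pd k (c i l m) x := by
    intro x i k l m
    have h1 := main 1 x i k l m
    have hb := hB x i k l m
    simp only [one_mul, mul_one] at h1
    linarith
  refine ⟨fun x k l m q => ?_, fun x i k l m => hA x i k l m⟩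
  have h := hB x m k l q
  calc ∑ p, c k l p x * c p m q x
      = ∑ p, c k l p x * c m p q x := by
        exact Finset.sum_congr rfl fun p _ => by rw [hcsymm p m q x]
    _ = ∑ p, c m l p x * c k p q x := h
    _ = ∑ p, c l m p x * c k p q x := by
        exact Finset.sum_congr rfl fun p _ => by rw [hcsymm m l p x]
end

section
/- Let β_{ij}(u) (i ≠ j) be smooth functions on an open subset of ℝ^n satisfying the Darboux–Egoroff system: ∂_k β_{ij} = β_{ik} β_{kj} for distinct i,j,k, and Σ_m ∂_m β_{ij} = 0 for i ≠ j, with β_{ij} = β_{ji}. Then the linear system ∂_j h_i = β_{ij} h_j (i ≠ j), ∂_i h_i = −Σ_{j≠i} β_{ij} h_j is compatible, i.e., the mixed-partials condition on the coefficient matrices of the system holds, so that ∂_k(∂_j h_i) = ∂_j(∂_k h_i) holds identically when all first derivatives are computed from the system. -/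
open scoped BigOperators

/-- The connection matrix `A_j` of the Lamé system `∂_j h = A_j h`:
    row `i ≠ j` has entry `β_{ij}` in column `j`; row `j` has entries `-β_{jm}`
    in columns `m ≠ j`. -/
noncomputable def lameMatrix {n : ℕ} (β : Fin n → Fin n → (Fin n → ℝ) → ℝ)
    (j : Fin n) (x : Fin n → ℝ) : Matrix (Fin n) (Fin n) ℝ :=
  fun i m => if i = j then (if m = j then 0 else -β j m x) else (if m = j then β i j x else 0)

lemma pd_neg' {n : ℕ} (a : Fin n) (f : (Fin n → ℝ) → ℝ) (x : Fin n → ℝ) :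
    pd a (fun y => -f y) x = -pd a f x := by
  simp [pd, fderiv_neg]

lemma pd_zero' {n : ℕ} (a : Fin n) (x : Fin n → ℝ) :
    pd a (fun _ => (0:ℝ)) x = 0 := by
  simp [pd]

lemma sum_single' {n : ℕ} (a : Fin n) (f : Fin n → ℝ) (h : ∀ b, b ≠ a → f b = 0) :
    ∑ l, f l = f a :=
  Finset.sum_eq_single_of_mem a (Finset.mem_univ a) (fun b _ hb => h b hb)

/-- If `β_{ij} = β_{ji}` satisfies the Darboux–Egoroff system on an open set `U`,
    then the Lamé system `∂_j h_i = β_{ij} h_j` (i ≠ j), `∂_i h_i = -∑_{j≠i} β_{ij} h_j`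
    is compatible: `∂_k A_j + A_j A_k` is symmetric in `j, k` on `U`. -/
theorem lame_system_compatible {n : ℕ} (U : Set (Fin n → ℝ)) (hU : IsOpen U)
    (β : Fin n → Fin n → (Fin n → ℝ) → ℝ)
    (hβ : ∀ i j, i ≠ j → ContDiffOn ℝ (⊤ : ℕ∞) (β i j) U)
    (hβsymm : ∀ i j x, i ≠ j → β i j x = β j i x)
    (hDE₁ : ∀ i j k, i ≠ j → j ≠ k → i ≠ k → ∀ x ∈ U, pd k (β i j) x = β i k x * β k j x)
    (hDE₂ : ∀ i j, i ≠ j → ∀ x ∈ U, ∑ m, pd m (β i j) x = 0) :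
    ∀ x ∈ U, ∀ j k i m : Fin n,
      pd k (fun x => lameMatrix β j x i m) x + (lameMatrix β j x * lameMatrix β k x) i m =
      pd j (fun x => lameMatrix β k x i m) x + (lameMatrix β k x * lameMatrix β j x) i m := by
  intro x hx j k i m
  rcases eq_or_ne j k with rfl | hjk
  · rfl
  have hkj : k ≠ j := hjk.symm
  -- key identity from the Darboux-Egoroff equations
  have key : ∀ p q : Fin n, p ≠ q →
      pd p (β p q) x + pd q (β p q) x
        + ∑ l, (if l = p ∨ l = q then 0 else β p l x * β l q x) = 0 := by
    intro p q hpq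
    have h0 := hDE₂ p q hpq x hx
    have hsum : ∑ l, pd l (β p q) x
        = ∑ l, ((if l = p then pd p (β p q) x else 0)
              + (if l = q then pd q (β p q) x else 0)
              + (if l = p ∨ l = q then 0 else β p l x * β l q x)) := by
      refine Finset.sum_congr rfl fun l _ => ?_
      by_cases hp : l = p
      · subst hp; simp [hpq]
      by_cases hq : l = q
      · subst hq; simp [hp]
      · simp [hp, hq, hDE₁ p q l hpq (Ne.symm hq) (Ne.symm hp) x hx]
    rw [hsum] at h0
    simpa [Finset.sum_add_distrib, Finset.sum_ite_eq'] using h0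
  by_cases hij : i = j
  · by_cases hmj : m = j
    · -- case 1 : i = j, m = j
      have e1 : (fun y => lameMatrix β j y i m) = fun _ => (0:ℝ) := by
        funext y; simp [lameMatrix, hij, hmj]
      have e2 : (fun y => lameMatrix β k y i m) = fun _ => (0:ℝ) := by
        funext y; simp [lameMatrix, hij, hmj, hjk]
      have e3 : (lameMatrix β j x * lameMatrix β k x) i m = β j k x * β k j x := by
        rw [Matrix.mul_apply, sum_single' k _ (fun b hb => by simp [lameMatrix, hb, hij, hmj, hjk, hkj])]
        simp [lameMatrix, hij, hmj, hjk, hkj]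
      have e4 : (lameMatrix β k x * lameMatrix β j x) i m = β j k x * β k j x := by
        rw [Matrix.mul_apply, sum_single' k _ (fun b hb => by simp [lameMatrix, hb, hij, hmj, hjk, hkj])]
        simp [lameMatrix, hij, hmj, hjk, hkj]
      rw [e1, e2, e3, e4, pd_zero', pd_zero']
    by_cases hmk : m = k
    · -- case 2 : i = j, m = k  (hard case, uses key j k)
      have e1 : (fun y => lameMatrix β j y i m) = fun y => -β j k y := by
        funext y; simp [lameMatrix, hij, hmk, hkj]
      have e2 : (fun y => lameMatrix β k y i m) = fun y => β j k y := by
        funext y; simp [lameMatrix, hij, hmk, hjk]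
      have e3 : (lameMatrix β j x * lameMatrix β k x) i m
          = -∑ l, (if l = j ∨ l = k then 0 else β j l x * β l k x) := by
        rw [Matrix.mul_apply, ← Finset.sum_neg_distrib]
        refine Finset.sum_congr rfl fun l _ => ?_
        by_cases hp : l = j
        · simp [lameMatrix, hp, hij, hmk, hkj]
        by_cases hq : l = k
        · simp [lameMatrix, hp, hq, hij, hmk, hkj]
        · simp [lameMatrix, hp, hq, hij, hmk, hkj]
      have e4 : (lameMatrix β k x * lameMatrix β j x) i m = 0 := by
        rw [Matrix.mul_apply]
        refine Finset.sum_eq_zero fun l _ => ?_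
        by_cases hp : l = j
        · simp [lameMatrix, hp, hij, hmk, hjk, hkj]
        by_cases hq : l = k
        · simp [lameMatrix, hp, hq, hij, hmk, hjk, hkj]
        · simp [lameMatrix, hp, hq, hij, hmk, hjk, hkj]
      rw [e1, e2, e3, e4, pd_neg']
      have hK := key j k hjk
      linarith [hK]
    · -- case 3 : i = j, m ∉ {j,k}
      have e1 : (fun y => lameMatrix β j y i m) = fun y => -β j m y := by
        funext y; simp [lameMatrix, hij, hmj]
      have e2 : (fun y => lameMatrix β k y i m) = fun _ => (0:ℝ) := by
        funext y; simp [lameMatrix, hij, hjk, hmj, hmk]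
      have e3 : (lameMatrix β j x * lameMatrix β k x) i m = β j k x * β k m x := by
        rw [Matrix.mul_apply, sum_single' k _ (fun b hb => by simp [lameMatrix, hb, hij, hmj, hmk, hjk, hkj])]
        simp [lameMatrix, hij, hmj, hmk, hjk, hkj]
      have e4 : (lameMatrix β k x * lameMatrix β j x) i m = 0 := by
        rw [Matrix.mul_apply]
        refine Finset.sum_eq_zero fun l _ => ?_
        by_cases hq : l = k
        · simp [lameMatrix, hq, hij, hjk, hkj, hmj]
        · simp [lameMatrix, hq, hij, hjk, hmj]
      rw [e1, e2, e3, e4, pd_neg', pd_zero']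
      rw [hDE₁ j m k (Ne.symm hmj) hmk hjk x hx]
      ring
  by_cases hik : i = k
  · by_cases hmj : m = j
    · -- case 4 : i = k, m = j (hard case, uses key k j)
      have e1 : (fun y => lameMatrix β j y i m) = fun y => β k j y := by
        funext y; simp [lameMatrix, hik, hmj, hkj]
      have e2 : (fun y => lameMatrix β k y i m) = fun y => -β k j y := by
        funext y; simp [lameMatrix, hik, hmj, hjk]
      have e3 : (lameMatrix β j x * lameMatrix β k x) i m = 0 := by
        rw [Matrix.mul_apply]
        refine Finset.sum_eq_zero fun l _ => ?_
        by_cases hp : l = j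
        · simp [lameMatrix, hp, hik, hmj, hjk, hkj]
        by_cases hq : l = k
        · simp [lameMatrix, hp, hq, hik, hmj, hjk, hkj]
        · simp [lameMatrix, hp, hq, hik, hmj, hjk, hkj]
      have e4 : (lameMatrix β k x * lameMatrix β j x) i m
          = -∑ l, (if l = k ∨ l = j then 0 else β k l x * β l j x) := by
        rw [Matrix.mul_apply, ← Finset.sum_neg_distrib]
        refine Finset.sum_congr rfl fun l _ => ?_
        by_cases hq : l = k
        · simp [lameMatrix, hq, hik, hmj, hjk, hkj]
        by_cases hp : l = j
        · simp [lameMatrix, hp, hq, hik, hmj, hjk, hkj]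
        · simp [lameMatrix, hp, hq, hik, hmj, hjk, hkj]
      rw [e1, e2, e3, e4, pd_neg']
      have hK := key k j hkj
      linarith [hK]
    by_cases hmk : m = k
    · -- case 5 : i = k, m = k
      have e1 : (fun y => lameMatrix β j y i m) = fun _ => (0:ℝ) := by
        funext y; simp [lameMatrix, hik, hmk, hkj]
      have e2 : (fun y => lameMatrix β k y i m) = fun _ => (0:ℝ) := by
        funext y; simp [lameMatrix, hik, hmk]
      have e3 : (lameMatrix β j x * lameMatrix β k x) i m = β k j x * β j k x := by
        rw [Matrix.mul_apply, sum_single' j _ (fun b hb => by simp [lameMatrix, hb, hik, hmk, hjk, hkj])]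
        simp [lameMatrix, hik, hmk, hjk, hkj]
      have e4 : (lameMatrix β k x * lameMatrix β j x) i m = β k j x * β j k x := by
        rw [Matrix.mul_apply, sum_single' j _ (fun b hb => by simp [lameMatrix, hb, hik, hmk, hjk, hkj])]
        simp [lameMatrix, hik, hmk, hjk, hkj]
      rw [e1, e2, e3, e4, pd_zero', pd_zero']
    · -- case 6 : i = k, m ∉ {j,k}
      have e1 : (fun y => lameMatrix β j y i m) = fun _ => (0:ℝ) := by
        funext y; simp [lameMatrix, hik, hkj, hmj]
      have e2 : (fun y => lameMatrix β k y i m) = fun y => -β k m y := by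
        funext y; simp [lameMatrix, hik, hmk]
      have e3 : (lameMatrix β j x * lameMatrix β k x) i m = 0 := by
        rw [Matrix.mul_apply]
        refine Finset.sum_eq_zero fun l _ => ?_
        by_cases hp : l = j
        · simp [lameMatrix, hp, hik, hjk, hkj, hmk]
        · simp [lameMatrix, hp, hik, hkj, hmj]
      have e4 : (lameMatrix β k x * lameMatrix β j x) i m = β k j x * β j m x := by
        rw [Matrix.mul_apply, sum_single' j _ (fun b hb => by simp [lameMatrix, hb, hik, hmj, hmk, hjk, hkj])]
        simp [lameMatrix, hik, hmj, hmk, hjk, hkj]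
      rw [e1, e2, e3, e4, pd_neg', pd_zero']
      rw [hDE₁ k m j (fun h => hmk h.symm) hmj hkj x hx]
      ring
  · by_cases hmj : m = j
    · -- case 7 : i ∉ {j,k}, m = j
      have e1 : (fun y => lameMatrix β j y i m) = fun y => β i j y := by
        funext y; simp [lameMatrix, hij, hmj]
      have e2 : (fun y => lameMatrix β k y i m) = fun _ => (0:ℝ) := by
        funext y; simp [lameMatrix, hik, hmj, hjk]
      have e3 : (lameMatrix β j x * lameMatrix β k x) i m = 0 := by
        rw [Matrix.mul_apply]
        refine Finset.sum_eq_zero fun l _ => ?_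
        by_cases hp : l = j
        · simp [lameMatrix, hp, hij, hmj, hjk, hkj]
        · simp [lameMatrix, hp, hij, hmj]
      have e4 : (lameMatrix β k x * lameMatrix β j x) i m = β i k x * β k j x := by
        rw [Matrix.mul_apply, sum_single' k _ (fun b hb => by simp [lameMatrix, hb, hij, hik, hmj, hjk, hkj])]
        simp [lameMatrix, hij, hik, hmj, hjk, hkj]
      rw [e1, e2, e3, e4, pd_zero']
      rw [hDE₁ i j k hij hjk hik x hx]
      ring
    by_cases hmk : m = k
    · -- case 8 : i ∉ {j,k}, m = k
      have e1 : (fun y => lameMatrix β j y i m) = fun _ => (0:ℝ) := by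
        funext y; simp [lameMatrix, hij, hmk, hkj]
      have e2 : (fun y => lameMatrix β k y i m) = fun y => β i k y := by
        funext y; simp [lameMatrix, hik, hmk]
      have e3 : (lameMatrix β j x * lameMatrix β k x) i m = β i j x * β j k x := by
        rw [Matrix.mul_apply, sum_single' j _ (fun b hb => by simp [lameMatrix, hb, hij, hik, hmk, hjk, hkj])]
        simp [lameMatrix, hij, hik, hmk, hjk, hkj]
      have e4 : (lameMatrix β k x * lameMatrix β j x) i m = 0 := by
        rw [Matrix.mul_apply]
        refine Finset.sum_eq_zero fun l _ => ?_
        by_cases hq : l = k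
        · simp [lameMatrix, hq, hik, hmk, hjk, hkj]
        · simp [lameMatrix, hq, hik, hmk]
      rw [e1, e2, e3, e4, pd_zero']
      rw [hDE₁ i k j hik hkj hij x hx]
      ring
    · -- case 9 : i ∉ {j,k}, m ∉ {j,k}
      have e1 : (fun y => lameMatrix β j y i m) = fun _ => (0:ℝ) := by
        funext y; simp [lameMatrix, hij, hmj]
      have e2 : (fun y => lameMatrix β k y i m) = fun _ => (0:ℝ) := by
        funext y; simp [lameMatrix, hik, hmk]
      have e3 : (lameMatrix β j x * lameMatrix β k x) i m = 0 := by
        rw [Matrix.mul_apply]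
        refine Finset.sum_eq_zero fun l _ => ?_
        by_cases hp : l = j
        · simp [lameMatrix, hp, hij, hmj, hjk, hmk]
        · simp [lameMatrix, hp, hij, hmj]
      have e4 : (lameMatrix β k x * lameMatrix β j x) i m = 0 := by
        rw [Matrix.mul_apply]
        refine Finset.sum_eq_zero fun l _ => ?_
        by_cases hq : l = k
        · simp [lameMatrix, hq, hik, hmk, hkj, hmj]
        · simp [lameMatrix, hq, hik, hmk]
      rw [e1, e2, e3, e4, pd_zero', pd_zero']
end
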